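/- If the graph G' contains C_6 as a contraction, then the graph G' − vx (obtained from G' by deleting the edge vx) contains P_6 as a contraction. -/

import Mathlib

/-- `W` is an `H`-witness structure of `G`: a family of pairwise disjoint nonempty
connected subsets of `V(G)` covering `V(G)` such that distinct `h₁ h₂` are adjacent in `H`
iff there is an edge of `G` between `W h₁` and `W h₂`. -/
def IsWitnessStructure {V U : Type*} (G : SimpleGraph V) (H : SimpleGraph U)
    (W : U → Set V) : Prop :=
  (∀ h, (W h).Nonempty) ∧
  (∀ h₁ h₂, h₁ ≠ h₂ → Disjoint (W h₁) (W h₂)) ∧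
  (⋃ h, W h) = Set.univ ∧
  (∀ h, (G.induce (W h)).Connected) ∧
  (∀ h₁ h₂, h₁ ≠ h₂ → ((∃ a ∈ W h₁, ∃ b ∈ W h₂, G.Adj a b) ↔ H.Adj h₁ h₂))

/-- `G` contains `H` as a contraction. -/
def ContainsAsContraction {V U : Type*} (G : SimpleGraph V) (H : SimpleGraph U) : Prop :=
  ∃ W : U → Set V, IsWitnessStructure G H W

/-- Raw vertex names for the graph `G'`: `G(Q,S)` with `q*` and `u₂` deleted and a new
vertex `x` added (adjacent to `v` and `w`). -/
inductive HVertex' (m n : ℕ) : Type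
  | elt : Fin m → HVertex' m n
  | hyp : Fin n → HVertex' m n
  | copy : Fin n → HVertex' m n
  | sub : Fin m → Fin n → HVertex' m n
  | u1 : HVertex' m n
  | x : HVertex' m n
  | v : HVertex' m n
  | w : HVertex' m n

/-- A raw vertex name is an actual vertex of `G'`: the subdivision vertex `q^i_j`
exists only when `q_i ∈ S_j`. -/
def HVertex'.OK {m n : ℕ} (S : Fin n → Set (Fin m)) : HVertex' m n → Prop
  | .sub i j => i ∈ S j
  | _ => True

/-- The vertex set of `G'`. -/
def GVertex' {m n : ℕ} (S : Fin n → Set (Fin m)) : Type := {y : HVertex' m n // y.OK S}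

/-- The (asymmetrically listed) edges of `G'`:
`q^i_j q_i`, `q^i_j S_j`, `q_i S_j'` (for `q_i ∈ S_j`), `S_j S_k'` (all `j,k`),
`u₁ S_j`, `u₁ v`, `x v`, `x w`, `w S_j'`. -/
def baseAdj' {m n : ℕ} (S : Fin n → Set (Fin m)) : HVertex' m n → HVertex' m n → Prop
  | .sub i _, .elt i' => i = i'
  | .sub _ j, .hyp j' => j = j'
  | .elt i, .copy j => i ∈ S j
  | .hyp _, .copy _ => True
  | .u1, .hyp _ => True
  | .u1, .v => True
  | .x, .v => True
  | .x, .w => True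
  | .w, .copy _ => True
  | _, _ => False

/-- The graph `G'`. -/
def GQS' {m n : ℕ} (S : Fin n → Set (Fin m)) : SimpleGraph (GVertex' S) :=
  SimpleGraph.fromRel (fun a b => baseAdj' S a.1 b.1)

/-!
A `C₆`-contraction of `G'` is the same as a map `φ : V(G') → C₆` with connected fibres that
realises exactly the edges of `C₆`. Since `S ∪ S'` induces `K_{n,n}` with `n ≥ 2`, its image lies
in a closed neighbourhood `N[z]`; as `S_n = Q`, every vertex other than `v, x` is within distance
one of `S ∪ S'`, so the part opposite `z` contains only `v` or `x`. Following the path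
`u₁ v x w` around the cycle and using that the parts are connected forces, up to an automorphism
of `C₆`, the arrangement `S, u₁, ·, ·, w, S'` with all `S_j` in one part and all `S_j'` in the
next. Connectivity of these two parts says that the set `B` of elements lying in the part of `S`
meets and misses every hyperedge. Conversely such a `B` yields the `P₆`-witness structure
`{v}, {u₁}, S ∪ B ∪ Q'_B, S' ∪ (Q \ B) ∪ Q'_{Q \ B}, {w}, {x}` of `G' − vx`, where `Q'_A` is
the set of subdivision vertices `q^i_j` with `q_i ∈ A`.
-/

open SimpleGraph

section ContractionMap

variable {V U U' : Type*} {G : SimpleGraph V} {H : SimpleGraph U} {H' : SimpleGraph U'}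

theorem SimpleGraph.reachable_induce_of_adj {s : Set V} {a b : V} (ha : a ∈ s) (hb : b ∈ s)
    (h : G.Adj a b) : (G.induce s).Reachable ⟨a, ha⟩ ⟨b, hb⟩ :=
  Adj.reachable h

theorem SimpleGraph.connected_induce_of_forall_eq {s : Set V} {c : V} (hc : c ∈ s)
    (h : ∀ y ∈ s, y = c) : (G.induce s).Connected := by
  obtain rfl : s = {c} := Set.eq_singleton_iff_unique_mem.mpr ⟨hc, h⟩
  simp

/-- The fibre `φ ⁻¹' {h}` plays the role of the witness set `W(h)`. -/
structure IsContractionMap (G : SimpleGraph V) (H : SimpleGraph U) (φ : V → U) : Prop where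
  connected_fiber (h : U) : (G.induce (φ ⁻¹' {h})).Connected
  adj_of_adj_of_ne {a b : V} : G.Adj a b → φ a ≠ φ b → H.Adj (φ a) (φ b)
  exists_adj {h₁ h₂ : U} : H.Adj h₁ h₂ → ∃ a b, φ a = h₁ ∧ φ b = h₂ ∧ G.Adj a b

theorem containsAsContraction_iff :
    ContainsAsContraction G H ↔ ∃ φ : V → U, IsContractionMap G H φ := by
  constructor
  · rintro ⟨W, hne, hdisj, hcover, hconn, hadj⟩
    have hmem (y : V) : ∃ h, y ∈ W h := Set.mem_iUnion.mp (hcover ▸ Set.mem_univ y)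
    choose φ hφ using hmem
    have hfiber (h : U) : φ ⁻¹' {h} = W h := by
      ext y
      refine ⟨fun hy => hy ▸ hφ y, fun hy => ?_⟩
      by_contra hne
      exact Set.disjoint_left.mp (hdisj _ _ hne) (hφ y) hy
    refine ⟨φ, fun h => hfiber h ▸ hconn h, fun hab hne => ?_, fun {h₁ h₂} h12 => ?_⟩
    · exact (hadj _ _ hne).mp ⟨_, hφ _, _, hφ _, hab⟩
    · obtain ⟨a, ha, b, hb, hab⟩ := (hadj _ _ h12.ne).mpr h12
      exact ⟨a, b, (hfiber h₁).ge ha, (hfiber h₂).ge hb, hab⟩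
  · rintro ⟨φ, hφ⟩
    refine ⟨fun h => φ ⁻¹' {h}, fun h => (hφ.connected_fiber h).nonempty.elim fun y => ⟨y, y.2⟩,
      fun h₁ h₂ hne => Set.disjoint_left.mpr fun y h₁y h₂y => hne (h₁y.symm.trans h₂y),
      Set.eq_univ_of_forall fun y => Set.mem_iUnion.mpr ⟨φ y, rfl⟩, hφ.connected_fiber,
      fun h₁ h₂ hne => ⟨?_, fun h12 => ?_⟩⟩
    · rintro ⟨a, rfl, b, rfl, hab⟩
      exact hφ.adj_of_adj_of_ne hab hne
    · obtain ⟨a, b, rfl, rfl, hab⟩ := hφ.exists_adj h12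
      exact ⟨a, rfl, b, rfl, hab⟩

namespace IsContractionMap

variable {φ : V → U} (hφ : IsContractionMap G H φ)
include hφ

theorem surjective : Function.Surjective φ := fun h =>
  (hφ.connected_fiber h).nonempty.elim fun y => ⟨y, y.2⟩

theorem eq_or_adj {a b : V} (hab : G.Adj a b) : φ a = φ b ∨ H.Adj (φ a) (φ b) :=
  or_iff_not_imp_left.mpr (hφ.adj_of_adj_of_ne hab)

theorem comp_iso (σ : H ≃g H') : IsContractionMap G H' (σ ∘ φ) where
  connected_fiber h := by
    have hfiber : σ ∘ φ ⁻¹' {h} = φ ⁻¹' {σ.symm h} := by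
      ext y; exact σ.toEquiv.eq_symm_apply.symm
    exact hfiber ▸ hφ.connected_fiber _
  adj_of_adj_of_ne hab hne :=
    σ.map_adj_iff.mpr (hφ.adj_of_adj_of_ne hab fun h => hne (congrArg σ h))
  exists_adj {h₁ h₂} h12 := by
    obtain ⟨a, b, ha, hb, hab⟩ := hφ.exists_adj (σ.symm.map_adj_iff.mpr h12)
    exact ⟨a, b, by simp [ha], by simp [hb], hab⟩

theorem mem_of_closed {A : Set V} {a : V} (ha : a ∈ A)
    (hA : ∀ b ∈ A, ∀ c, G.Adj b c → φ c = φ a → c ∈ A) {y : V} (hy : φ y = φ a) : y ∈ A := by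
  obtain ⟨p⟩ := (hφ.connected_fiber (φ a)).preconnected ⟨a, rfl⟩ ⟨y, hy⟩
  suffices ∀ {b c : φ ⁻¹' {φ a}}, (G.induce (φ ⁻¹' {φ a})).Walk b c → b.1 ∈ A → c.1 ∈ A from
    this p ha
  intro _ _ q hb
  induction q with
  | nil => exact hb
  | @cons _ c _ hbc _ ih => exact ih (hA _ hb _ hbc c.2)

theorem eq_of_forall_adj_ne {a y : V} (ha : ∀ c, G.Adj a c → φ c ≠ φ a) (hy : φ y = φ a) :
    y = a :=
  hφ.mem_of_closed (A := {a}) rfl (by rintro _ rfl c hbc hc; exact absurd hc (ha c hbc)) hy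

end IsContractionMap

end ContractionMap

namespace SimpleGraph.cycleGraph

variable (n : ℕ)

def addIso (a : Fin (n + 2)) : cycleGraph (n + 2) ≃g cycleGraph (n + 2) where
  toEquiv := Equiv.addRight a
  map_rel_iff' := by simp [cycleGraph_adj]

@[simp] theorem addIso_apply (a b : Fin (n + 2)) : addIso n a b = b + a := rfl

def negIso : cycleGraph (n + 2) ≃g cycleGraph (n + 2) where
  toEquiv := Equiv.neg _
  map_rel_iff' := by simp [cycleGraph_adj, neg_add_eq_sub, or_comm]

@[simp] theorem negIso_apply (a : Fin (n + 2)) : negIso n a = -a := rfl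

end SimpleGraph.cycleGraph

def IsProperTwoColoring {m n : ℕ} (S : Fin n → Set (Fin m)) (B : Set (Fin m)) : Prop :=
  ∀ j, (S j ∩ B).Nonempty ∧ (S j \ B).Nonempty

namespace GVertex'

variable {m n : ℕ} {S : Fin n → Set (Fin m)}

def elt (i : Fin m) : GVertex' S := ⟨.elt i, trivial⟩
def hyp (j : Fin n) : GVertex' S := ⟨.hyp j, trivial⟩
def copy (j : Fin n) : GVertex' S := ⟨.copy j, trivial⟩
def sub {i : Fin m} {j : Fin n} (hij : i ∈ S j) : GVertex' S := ⟨.sub i j, hij⟩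
def u1 : GVertex' S := ⟨.u1, trivial⟩
def x : GVertex' S := ⟨.x, trivial⟩
def v : GVertex' S := ⟨.v, trivial⟩
def w : GVertex' S := ⟨.w, trivial⟩

@[simp] theorem val_elt (i : Fin m) : (elt i : GVertex' S).1 = .elt i := rfl
@[simp] theorem val_hyp (j : Fin n) : (hyp j : GVertex' S).1 = .hyp j := rfl
@[simp] theorem val_copy (j : Fin n) : (copy j : GVertex' S).1 = .copy j := rfl
@[simp] theorem val_sub {i : Fin m} {j : Fin n} (hij : i ∈ S j) : (sub hij).1 = .sub i j := rfl
@[simp] theorem val_u1 : (u1 : GVertex' S).1 = .u1 := rfl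
@[simp] theorem val_x : (x : GVertex' S).1 = .x := rfl
@[simp] theorem val_v : (v : GVertex' S).1 = .v := rfl
@[simp] theorem val_w : (w : GVertex' S).1 = .w := rfl

/-- `GVertex' S` is not reducibly a subtype, so `Subtype.ext_iff` does not fire on it. -/
theorem ext_iff {a b : GVertex' S} : a = b ↔ a.1 = b.1 := Subtype.ext_iff

theorem adj_iff {a b : GVertex' S} :
    (GQS' S).Adj a b ↔ a.1 ≠ b.1 ∧ (baseAdj' S a.1 b.1 ∨ baseAdj' S b.1 a.1) :=
  (SimpleGraph.fromRel_adj _ _ _).trans (and_congr_left fun _ => not_congr Subtype.ext_iff)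

theorem adj_u1_v : (GQS' S).Adj u1 v := by simp [adj_iff, baseAdj']
theorem adj_v_x : (GQS' S).Adj v x := by simp [adj_iff, baseAdj']
theorem adj_x_w : (GQS' S).Adj x w := by simp [adj_iff, baseAdj']
theorem adj_u1_hyp (j : Fin n) : (GQS' S).Adj u1 (hyp j) := by simp [adj_iff, baseAdj']
theorem adj_w_copy (j : Fin n) : (GQS' S).Adj w (copy j) := by simp [adj_iff, baseAdj']
theorem adj_hyp_copy (j k : Fin n) : (GQS' S).Adj (hyp j) (copy k) := by simp [adj_iff, baseAdj']
theorem adj_elt_copy {i : Fin m} {j : Fin n} (hij : i ∈ S j) : (GQS' S).Adj (elt i) (copy j) := by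
  simp [adj_iff, baseAdj', hij]
theorem adj_sub_elt {i : Fin m} {j : Fin n} (hij : i ∈ S j) : (GQS' S).Adj (sub hij) (elt i) := by
  simp [adj_iff, baseAdj']
theorem adj_sub_hyp {i : Fin m} {j : Fin n} (hij : i ∈ S j) : (GQS' S).Adj (sub hij) (hyp j) := by
  simp [adj_iff, baseAdj']

theorem eq_v_or_eq_hyp_of_adj_u1 {c : GVertex' S} (h : (GQS' S).Adj u1 c) :
    c = v ∨ ∃ j, c = hyp j := by
  simp only [adj_iff, ext_iff] at h ⊢
  obtain ⟨c, hc⟩ := c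
  cases c <;> simp_all [baseAdj']

theorem eq_u1_or_eq_x_of_adj_v {c : GVertex' S} (h : (GQS' S).Adj v c) : c = u1 ∨ c = x := by
  simp only [adj_iff, ext_iff] at h ⊢
  obtain ⟨c, hc⟩ := c
  cases c <;> simp_all [baseAdj']

theorem of_adj_hyp {j : Fin n} {c : GVertex' S} (h : (GQS' S).Adj (hyp j) c) :
    c = u1 ∨ (∃ k, c = copy k) ∨ ∃ i, ∃ hij : i ∈ S j, c = sub hij := by
  simp only [adj_iff, ext_iff] at h ⊢
  obtain ⟨c, hc⟩ := c
  cases c <;> simp_all [baseAdj']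
  case sub => subst_vars; exact hc

theorem of_adj_sub {i : Fin m} {j : Fin n} {hij : i ∈ S j} {c : GVertex' S}
    (h : (GQS' S).Adj (sub hij) c) : c = elt i ∨ c = hyp j := by
  simp only [adj_iff, ext_iff] at h ⊢
  obtain ⟨c, hc⟩ := c
  cases c <;> simp_all [baseAdj', eq_comm]

theorem of_adj_copy {j : Fin n} {c : GVertex' S} (h : (GQS' S).Adj (copy j) c) :
    c = w ∨ (∃ k, c = hyp k) ∨ ∃ i ∈ S j, c = elt i := by
  simp only [adj_iff, ext_iff] at h ⊢
  obtain ⟨c, hc⟩ := c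
  cases c <;> simp_all [baseAdj']

theorem adj_deleteEdges_vx {a b : GVertex' S} (h : (GQS' S).Adj a b)
    (hab : a ≠ v ∧ b ≠ v ∨ a ≠ x ∧ b ≠ x) : ((GQS' S).deleteEdges {s(v, x)}).Adj a b := by
  simp only [deleteEdges_adj, h, Set.mem_singleton_iff, Sym2.eq_iff, true_and]
  tauto

theorem reachable_induce_deleteEdges_vx {s : Set (GVertex' S)} (hv : v ∉ s) ⦃a b : GVertex' S⦄
    (ha : a ∈ s) (hb : b ∈ s) (h : (GQS' S).Adj a b) :
    (((GQS' S).deleteEdges {s(v, x)}).induce s).Reachable ⟨a, ha⟩ ⟨b, hb⟩ :=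
  reachable_induce_of_adj ha hb <|
    adj_deleteEdges_vx h (.inl ⟨ne_of_mem_of_not_mem ha hv, ne_of_mem_of_not_mem hb hv⟩)

theorem eq_v_or_eq_x_or_near_core [Nonempty (Fin n)] {jQ : Fin n} (hQ : S jQ = Set.univ)
    (y : GVertex' S) :
    y = v ∨ y = x ∨
      ∃ j, y = hyp j ∨ (GQS' S).Adj y (hyp j) ∨ y = copy j ∨ (GQS' S).Adj y (copy j) := by
  obtain ⟨y, hy⟩ := y
  cases y with
  | elt i => exact .inr <| .inr ⟨jQ, .inr <| .inr <| .inr <| adj_elt_copy (hQ ▸ trivial)⟩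
  | hyp j => exact .inr <| .inr ⟨j, .inl rfl⟩
  | copy j => exact .inr <| .inr ⟨j, .inr <| .inr <| .inl rfl⟩
  | sub i j => exact .inr <| .inr ⟨j, .inr <| .inl <| adj_sub_hyp hy⟩
  | u1 => exact .inr <| .inr ⟨jQ, .inr <| .inl <| adj_u1_hyp jQ⟩
  | x => exact .inr <| .inl rfl
  | v => exact .inl rfl
  | w => exact .inr <| .inr ⟨jQ, .inr <| .inr <| .inr <| adj_w_copy jQ⟩

end GVertex'

theorem cycleGraph_six_exists_near {ι κ : Type*} [Nonempty ι] [Nonempty κ] {f : ι → Fin 6}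
    {g : κ → Fin 6} (h : ∀ i k, f i = g k ∨ (cycleGraph 6).Adj (f i) (g k)) :
    ∃ z, (∀ i, z = f i ∨ (cycleGraph 6).Adj z (f i)) ∧
      ∀ k, z = g k ∨ (cycleGraph 6).Adj z (g k) := by
  obtain ⟨i₀⟩ := ‹Nonempty ι›
  obtain ⟨k₀⟩ := ‹Nonempty κ›
  by_cases hf : ∀ i, f i = f i₀
  · exact ⟨f i₀, fun i => .inl (hf i).symm, h i₀⟩
  by_cases hg : ∀ k, g k = g k₀
  · refine ⟨g k₀, fun i => ?_, fun k => .inl (hg k).symm⟩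
    have := h i k₀
    grind [cycleGraph_adj]
  simp only [not_forall] at hf hg
  obtain ⟨i₁, hi₁⟩ := hf
  obtain ⟨k₁, hk₁⟩ := hg
  -- distinct `c, d` with two common closed neighbours `a ≠ b` are adjacent, and then `c, d`
  -- are their only common closed neighbours
  have key : ∀ a b c d l : Fin 6, a ≠ b → c ≠ d →
      (a = c ∨ (cycleGraph 6).Adj a c) → (a = d ∨ (cycleGraph 6).Adj a d) →
      (b = c ∨ (cycleGraph 6).Adj b c) → (b = d ∨ (cycleGraph 6).Adj b d) →
      (l = c ∨ (cycleGraph 6).Adj l c) → (l = d ∨ (cycleGraph 6).Adj l d) →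
      a = l ∨ (cycleGraph 6).Adj a l := by decide
  exact ⟨f i₀, fun i => key _ _ _ _ _ (Ne.symm hi₁) (Ne.symm hk₁) (h _ _) (h _ _) (h _ _)
    (h _ _) (h _ _) (h _ _), h i₀⟩

open GVertex'

section CycleContraction

variable {m n : ℕ} {S : Fin n → Set (Fin m)} {φ : GVertex' S → Fin 6}

/-- The core `S ∪ S'` of `G'` lies within distance one of the part `0`. -/
def CoreNearZero (φ : GVertex' S → Fin 6) : Prop :=
  ∀ j, ((0 : Fin 6) = φ (hyp j) ∨ (cycleGraph 6).Adj 0 (φ (hyp j))) ∧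
    ((0 : Fin 6) = φ (copy j) ∨ (cycleGraph 6).Adj 0 (φ (copy j)))

/-- The arrangement `S, u₁, ·, ·, w, S'` around the cycle. -/
def IsStandard (φ : GVertex' S → Fin 6) : Prop :=
  (∀ j, φ (hyp j) = 0) ∧ φ u1 = 1 ∧ φ w = 4 ∧ ∀ j, φ (copy j) = 5

variable (hφ : IsContractionMap (GQS' S) (cycleGraph 6) φ)
include hφ

theorem exists_coreNearZero_comp [Nonempty (Fin n)] :
    ∃ z, CoreNearZero (cycleGraph.addIso 4 z ∘ φ) := by
  obtain ⟨z, hhyp, hcopy⟩ := cycleGraph_six_exists_near (f := fun j => φ (hyp j))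
    (g := fun k => φ (copy k)) fun j k => hφ.eq_or_adj (adj_hyp_copy j k)
  refine ⟨-z, fun j => ⟨?_, ?_⟩⟩
  · have := hhyp j
    simp only [Function.comp_apply, cycleGraph.addIso_apply]
    grind [cycleGraph_adj]
  · have := hcopy j
    simp only [Function.comp_apply, cycleGraph.addIso_apply]
    grind [cycleGraph_adj]

variable (h0 : CoreNearZero φ)
include h0

-- `{u₁, v}` is closed under neighbours inside the part `2`, which contains `w`.
theorem apply_ne_two_of_mem_u1_v (hx : φ x = 3) (hw : φ w = 2) :
    ∀ a ∈ ({u1, v} : Set (GVertex' S)), φ a ≠ 2 := by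
  intro a ha ha2
  have hwA := hφ.mem_of_closed ha ?_ (hw.trans ha2.symm)
  · simp [ext_iff] at hwA
  rintro b (rfl | rfl) c hbc hc
  · rcases eq_v_or_eq_hyp_of_adj_u1 hbc with rfl | ⟨j, rfl⟩
    · exact .inr rfl
    · have := (h0 j).1
      grind [cycleGraph_adj]
  · rcases eq_u1_or_eq_x_of_adj_v hbc with rfl | rfl
    · exact .inl rfl
    · grind

variable {jQ : Fin n} (hQ : S jQ = Set.univ)
include hQ

theorem eq_v_or_eq_x_of_eq_three {y : GVertex' S} (hy : φ y = 3) : y = v ∨ y = x := by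
  have : Nonempty (Fin n) := ⟨jQ⟩
  obtain h | h | ⟨j, h | h | h | h⟩ := eq_v_or_eq_x_or_near_core hQ y
  · exact .inl h
  · exact .inr h
  all_goals exfalso; have := h0 j
  · subst h; grind [cycleGraph_adj]
  · have := hφ.eq_or_adj h; grind [cycleGraph_adj]
  · subst h; grind [cycleGraph_adj]
  · have := hφ.eq_or_adj h; grind [cycleGraph_adj]

theorem apply_u1_ne_three : φ u1 ≠ 3 := fun h => by
  rcases eq_v_or_eq_x_of_eq_three hφ h0 hQ h with h | h <;> simp [ext_iff] at h

theorem apply_w_ne_three : φ w ≠ 3 := fun h => by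
  rcases eq_v_or_eq_x_of_eq_three hφ h0 hQ h with h | h <;> simp [ext_iff] at h

theorem isStandard_of_x_eq_three (hx : φ x = 3) (hw : φ w = 2) :
    IsStandard (cycleGraph.negIso 4 ∘ φ) := by
  have hcopy (j : Fin n) : φ (copy j) = 1 := by
    have := (h0 j).2
    have := hφ.eq_or_adj (adj_w_copy j)
    grind [cycleGraph_adj]
  have hu1₃ := apply_u1_ne_three hφ h0 hQ
  have hu1₄ : φ u1 ≠ 4 := fun h => by
    have := (h0 jQ).1
    have := hφ.eq_or_adj (adj_u1_hyp jQ)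
    have := hφ.eq_or_adj (adj_hyp_copy jQ jQ)
    have := hcopy jQ
    grind [cycleGraph_adj]
  have hu1v := hφ.eq_or_adj adj_u1_v
  have hv : φ v = 4 := by
    have := hφ.eq_or_adj adj_v_x
    have := apply_ne_two_of_mem_u1_v hφ h0 hx hw u1 (.inl rfl)
    have := apply_ne_two_of_mem_u1_v hφ h0 hx hw v (.inr rfl)
    grind [cycleGraph_adj]
  have hu1 : φ u1 = 5 := by grind [cycleGraph_adj]
  have hhyp (j : Fin n) : φ (hyp j) = 0 := by
    have := hφ.eq_or_adj (adj_u1_hyp j)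
    have := hφ.eq_or_adj (adj_hyp_copy j j)
    have := hcopy j
    grind [cycleGraph_adj]
  refine ⟨fun j => ?_, ?_, ?_, fun j => ?_⟩ <;>
    simp only [Function.comp_apply, cycleGraph.negIso_apply, hhyp, hu1, hw, hcopy] <;> decide

theorem isStandard_of_v_eq_three (hv : φ v = 3) (hx : φ x = 4) :
    IsStandard (cycleGraph.addIso 4 (-1) ∘ φ) := by
  have hu1₃ := apply_u1_ne_three hφ h0 hQ
  -- `u₁` has no neighbour in its own part, so it cannot share the part `4` with `x`
  have hu1₄ : φ u1 ≠ 4 := fun h => by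
    refine absurd (hφ.eq_of_forall_adj_ne (a := u1) (y := x) (fun c hc => ?_) (hx.trans h.symm))
      (by simp [ext_iff])
    rcases eq_v_or_eq_hyp_of_adj_u1 hc with rfl | ⟨j, rfl⟩
    · grind
    · have := (h0 j).1
      grind [cycleGraph_adj]
  have hu1 : φ u1 = 2 := by
    have := hφ.eq_or_adj adj_u1_v
    grind [cycleGraph_adj]
  have hhyp (j : Fin n) : φ (hyp j) = 1 := by
    have := (h0 j).1
    have := hφ.eq_or_adj (adj_u1_hyp j)
    grind [cycleGraph_adj]
  have hw₃ := apply_w_ne_three hφ h0 hQ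
  have hw₄ : φ w ≠ 4 := fun h => by
    have := (h0 jQ).2
    have := hφ.eq_or_adj (adj_w_copy jQ)
    have := hφ.eq_or_adj (adj_hyp_copy jQ jQ)
    have := hhyp jQ
    grind [cycleGraph_adj]
  have hw : φ w = 5 := by
    have := hφ.eq_or_adj adj_x_w
    grind [cycleGraph_adj]
  have hcopy (j : Fin n) : φ (copy j) = 0 := by
    have := hφ.eq_or_adj (adj_w_copy j)
    have := hφ.eq_or_adj (adj_hyp_copy j j)
    have := hhyp j
    grind [cycleGraph_adj]
  refine ⟨fun j => ?_, ?_, ?_, fun j => ?_⟩ <;>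
    simp only [Function.comp_apply, cycleGraph.addIso_apply, hhyp, hu1, hw, hcopy] <;> decide

theorem exists_isStandard_of_coreNearZero :
    ∃ ψ, IsContractionMap (GQS' S) (cycleGraph 6) ψ ∧ IsStandard ψ := by
  have hneg := hφ.comp_iso (cycleGraph.negIso 4)
  have h0neg : CoreNearZero (cycleGraph.negIso 4 ∘ φ) := fun j => by
    have := h0 j
    simp only [Function.comp_apply, cycleGraph.negIso_apply]
    grind [cycleGraph_adj]
  have hvx : φ x = 3 ∨ φ v = 3 := by
    obtain ⟨y, hy⟩ := hφ.surjective 3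
    rcases eq_v_or_eq_x_of_eq_three hφ h0 hQ hy with rfl | rfl
    exacts [.inr hy, .inl hy]
  have := apply_w_ne_three hφ h0 hQ
  have := hφ.eq_or_adj adj_x_w
  have := hφ.eq_or_adj adj_v_x
  obtain ⟨hx, hw⟩ | ⟨hx, hw⟩ | ⟨hv, hx⟩ | ⟨hv, hx⟩ :
      (φ x = 3 ∧ φ w = 2) ∨ (φ x = 3 ∧ φ w = 4) ∨ (φ v = 3 ∧ φ x = 4) ∨ (φ v = 3 ∧ φ x = 2) := by
    grind [cycleGraph_adj]
  · exact ⟨_, hφ.comp_iso _, isStandard_of_x_eq_three hφ h0 hQ hx hw⟩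
  · refine ⟨_, hneg.comp_iso _, isStandard_of_x_eq_three hneg h0neg hQ ?_ ?_⟩ <;>
      simp only [Function.comp_apply, cycleGraph.negIso_apply, hx, hw] <;> decide
  · exact ⟨_, hφ.comp_iso _, isStandard_of_v_eq_three hφ h0 hQ hv hx⟩
  · refine ⟨_, hneg.comp_iso _, isStandard_of_v_eq_three hneg h0neg hQ ?_ ?_⟩ <;>
      simp only [Function.comp_apply, cycleGraph.negIso_apply, hv, hx] <;> decide

end CycleContraction

theorem exists_isStandard {m n : ℕ} {S : Fin n → Set (Fin m)} {jQ : Fin n}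
    (hQ : S jQ = Set.univ) {φ : GVertex' S → Fin 6}
    (hφ : IsContractionMap (GQS' S) (cycleGraph 6) φ) :
    ∃ ψ, IsContractionMap (GQS' S) (cycleGraph 6) ψ ∧ IsStandard ψ := by
  have : Nonempty (Fin n) := ⟨jQ⟩
  obtain ⟨z, hz⟩ := exists_coreNearZero_comp hφ
  exact exists_isStandard_of_coreNearZero (hφ.comp_iso _) hz hQ

theorem isProperTwoColoring_of_isStandard {m n : ℕ} [Nontrivial (Fin n)]
    {S : Fin n → Set (Fin m)} {ψ : GVertex' S → Fin 6}
    (hψ : IsContractionMap (GQS' S) (cycleGraph 6) ψ) (hstd : IsStandard ψ) :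
    IsProperTwoColoring S {i | ψ (elt i) = 0} := by
  obtain ⟨hhyp, hu1, hw, hcopy⟩ := hstd
  intro j
  obtain ⟨k, hkj⟩ := exists_ne j
  constructor
  -- otherwise `S_j` together with its subdivision vertices would be a whole part
  · by_contra hempty
    have hne (i : Fin m) (hij : i ∈ S j) : ψ (elt i) ≠ 0 := fun h => hempty ⟨i, hij, h⟩
    have hk := hψ.mem_of_closed (A := {c | c = hyp j ∨ ∃ i, ∃ hij : i ∈ S j, c = sub hij})
      (.inl rfl) ?_ ((hhyp k).trans (hhyp j).symm)
    · simp [ext_iff, hkj] at hk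
    · rintro b (rfl | ⟨i, hij, rfl⟩) c hbc hc
      · rcases of_adj_hyp hbc with rfl | ⟨l, rfl⟩ | ⟨i, hij, rfl⟩
        · simp [hu1, hhyp] at hc
        · simp [hcopy, hhyp] at hc
        · exact .inr ⟨i, hij, rfl⟩
      · rcases of_adj_sub hbc with rfl | rfl
        · exact absurd (hc.trans (hhyp j)) (hne i hij)
        · exact .inl rfl
  -- otherwise `S_j'` would have no neighbour in its part, which also contains `S_k'`
  · by_contra hempty
    have hB (i : Fin m) (hij : i ∈ S j) : ψ (elt i) = 0 := by_contra fun h => hempty ⟨i, hij, h⟩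
    refine absurd (hψ.eq_of_forall_adj_ne (fun c hc => ?_) ((hcopy k).trans (hcopy j).symm))
      (by simp [ext_iff, hkj])
    rcases of_adj_copy hc with rfl | ⟨l, rfl⟩ | ⟨i, hij, rfl⟩
    · simp [hw, hcopy]
    · simp [hhyp, hcopy]
    · simp [hB i hij, hcopy]

section PathContraction

variable {m n : ℕ} {S : Fin n → Set (Fin m)} (B : Set (Fin m)) [DecidablePred (· ∈ B)]

def pathPart : HVertex' m n → Fin 6
  | .v => 0
  | .u1 => 1
  | .hyp _ => 2
  | .copy _ => 3
  | .w => 4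
  | .x => 5
  | .elt i | .sub i _ => if i ∈ B then 2 else 3

theorem pathPart_eq_or_adj {a b : HVertex' m n} (h : baseAdj' S a b) (hxv : ¬(a = .x ∧ b = .v)) :
    pathPart B a = pathPart B b ∨ (pathGraph 6).Adj (pathPart B a) (pathPart B b) := by
  cases a <;> cases b <;> simp [baseAdj', pathPart, pathGraph_adj] at h hxv ⊢ <;>
    split_ifs <;> simp_all

theorem eq_of_pathPart_eq {y c : GVertex' S} (hc : c.1 = .v ∨ c.1 = .u1 ∨ c.1 = .w ∨ c.1 = .x)
    (h : pathPart B y.1 = pathPart B c.1) : y = c := by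
  rw [ext_iff]
  generalize y.1 = y at h ⊢
  rcases hc with hc | hc | hc | hc <;> rw [hc] at h ⊢ <;> cases y <;> simp [pathPart] at h ⊢ <;>
    split_ifs at h <;> simp at h

variable {B} {jQ : Fin n} (hQ : S jQ = Set.univ) (hB : IsProperTwoColoring S B)
include hQ hB

theorem connected_pathPart_two :
    (((GQS' S).deleteEdges {s(v, x)}).induce ((fun y => pathPart B y.1) ⁻¹' {2})).Connected := by
  set s := (fun y : GVertex' S => pathPart B y.1) ⁻¹' {2}
  have step := reachable_induce_deleteEdges_vx (s := s) (by simp [s, pathPart])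
  have reach_elt {i : Fin m} (hi : i ∈ B) :
      (((GQS' S).deleteEdges {s(v, x)}).induce s).Reachable ⟨hyp jQ, rfl⟩ ⟨elt i, if_pos hi⟩ :=
    have hiQ : i ∈ S jQ := hQ ▸ trivial
    (step _ (if_pos hi) (adj_sub_hyp hiQ).symm).trans (step _ _ (adj_sub_elt hiQ))
  refine (connected_iff_exists_forall_reachable _).mpr ⟨⟨hyp jQ, rfl⟩, ?_⟩
  rintro ⟨y, hys⟩
  change pathPart B y.1 = 2 at hys
  obtain ⟨y, hy⟩ := y
  cases y with
  | hyp j =>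
    obtain ⟨i, hij, hi⟩ := (hB j).1
    exact (reach_elt hi).trans ((step _ (if_pos hi) (adj_sub_elt hij).symm).trans
      (step _ _ (adj_sub_hyp hij)))
  | elt i =>
    have hi : i ∈ B := by_contra fun hi => absurd (ite_eq_left_iff.mp hys hi) (by decide)
    exact reach_elt hi
  | sub i j =>
    have hi : i ∈ B := by_contra fun hi => absurd (ite_eq_left_iff.mp hys hi) (by decide)
    exact (reach_elt hi).trans (step _ _ (adj_sub_elt hy).symm)
  | _ => simp [pathPart] at hys

theorem connected_pathPart_three :
    (((GQS' S).deleteEdges {s(v, x)}).induce ((fun y => pathPart B y.1) ⁻¹' {3})).Connected := by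
  set s := (fun y : GVertex' S => pathPart B y.1) ⁻¹' {3}
  have step := reachable_induce_deleteEdges_vx (s := s) (by simp [s, pathPart])
  have reach_elt {i : Fin m} (hi : i ∉ B) :
      (((GQS' S).deleteEdges {s(v, x)}).induce s).Reachable ⟨copy jQ, rfl⟩ ⟨elt i, if_neg hi⟩ :=
    step _ _ (adj_elt_copy (hQ ▸ trivial : i ∈ S jQ)).symm
  refine (connected_iff_exists_forall_reachable _).mpr ⟨⟨copy jQ, rfl⟩, ?_⟩
  rintro ⟨y, hys⟩
  change pathPart B y.1 = 3 at hys
  obtain ⟨y, hy⟩ := y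
  cases y with
  | copy j =>
    obtain ⟨i, hij, hi⟩ := (hB j).2
    exact (reach_elt hi).trans (step _ _ (adj_elt_copy hij))
  | elt i =>
    have hi : i ∉ B := fun hi => absurd (ite_eq_right_iff.mp hys hi) (by decide)
    exact reach_elt hi
  | sub i j =>
    have hi : i ∉ B := fun hi => absurd (ite_eq_right_iff.mp hys hi) (by decide)
    exact (reach_elt hi).trans (step _ _ (adj_sub_elt hy).symm)
  | _ => simp [pathPart] at hys

theorem isContractionMap_pathPart :
    IsContractionMap ((GQS' S).deleteEdges {s(v, x)}) (pathGraph 6) (fun y => pathPart B y.1) where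
  connected_fiber h := by
    fin_cases h
    · exact connected_induce_of_forall_eq (c := v) rfl fun y hy => eq_of_pathPart_eq B (.inl rfl) hy
    · exact connected_induce_of_forall_eq (c := u1) rfl fun y hy =>
        eq_of_pathPart_eq B (.inr (.inl rfl)) hy
    · exact connected_pathPart_two hQ hB
    · exact connected_pathPart_three hQ hB
    · exact connected_induce_of_forall_eq (c := w) rfl fun y hy =>
        eq_of_pathPart_eq B (.inr (.inr (.inl rfl))) hy
    · exact connected_induce_of_forall_eq (c := x) rfl fun y hy =>
        eq_of_pathPart_eq B (.inr (.inr (.inr rfl))) hy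
  adj_of_adj_of_ne {a b} hab hne := by
    rw [deleteEdges_adj, adj_iff] at hab
    obtain ⟨⟨-, hab | hba⟩, hvx⟩ := hab
    · refine (pathPart_eq_or_adj B hab fun ⟨ha, hb⟩ => hvx ?_).resolve_left hne
      simp [ext_iff, ha, hb]
    · refine ((pathPart_eq_or_adj B hba fun ⟨hb, ha⟩ => hvx ?_).resolve_left (Ne.symm hne)).symm
      simp [ext_iff, ha, hb]
  exists_adj {h₁ h₂} h12 := by
    wlog h : h₁.val + 1 = h₂.val generalizing h₁ h₂
    · obtain ⟨a, b, ha, hb, hab⟩ := this h12.symm ((pathGraph_adj.mp h12).resolve_left h)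
      exact ⟨b, a, hb, ha, hab.symm⟩
    fin_cases h₁ <;> fin_cases h₂ <;> simp at h
    · exact ⟨v, u1, rfl, rfl, adj_deleteEdges_vx adj_u1_v.symm (by simp [ext_iff])⟩
    · exact ⟨u1, hyp jQ, rfl, rfl, adj_deleteEdges_vx (adj_u1_hyp jQ) (by simp [ext_iff])⟩
    · exact ⟨hyp jQ, copy jQ, rfl, rfl, adj_deleteEdges_vx (adj_hyp_copy jQ jQ) (by simp [ext_iff])⟩
    · exact ⟨copy jQ, w, rfl, rfl, adj_deleteEdges_vx (adj_w_copy jQ).symm (by simp [ext_iff])⟩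
    · exact ⟨w, x, rfl, rfl, adj_deleteEdges_vx adj_x_w.symm (by simp [ext_iff])⟩

end PathContraction

theorem stmt_18 {m n : ℕ} (S : Fin n → Set (Fin m)) (hn : 2 ≤ n)
    (hSlast : S ⟨n - 1, by omega⟩ = Set.univ)
    (h : ContainsAsContraction (GQS' S) (SimpleGraph.cycleGraph 6)) :
    ContainsAsContraction
      ((GQS' S).deleteEdges {s((⟨.v, trivial⟩ : GVertex' S), (⟨.x, trivial⟩ : GVertex' S))})
      (SimpleGraph.pathGraph 6) := by
  classical
  have : Nontrivial (Fin n) := Fin.nontrivial_iff_two_le.mpr hn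
  obtain ⟨φ, hφ⟩ := containsAsContraction_iff.mp h
  obtain ⟨ψ, hψ, hstd⟩ := exists_isStandard hSlast hφ
  exact containsAsContraction_iff.mpr
    ⟨_, isContractionMap_pathPart hSlast (isProperTwoColoring_of_isStandard hψ hstd)⟩
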